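/- Let T be an observation table and M a transducer compatible with T. Then there exists a transducer M', with at most as many states as M, that is compatible with T and is the transducer resulting from some merging map on T. (Concretely, the transducer resulting from the merging map induced by M is such an M'.) -/

import Mathlib

/-!
Every merging map already yields a compatible transducer. By conditions (3) and (4) the
run of the resulting transducer on `u ∈ dom f` ends in `q_u` with output `f(ε)⁻¹ f(u)`,
and a run on a word of `P_T` outside `dom f` is blocked; by (2) every word with an entry
in `Γ*` lies in `dom f`, and by (5) the final output of `q_u` completes `f(u)` to `T(u)`
and is undefined when `T(u) = ⊥`. It remains to check that the map induced by `M` is a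
merging map (along a word of `P_Γ` its `f` is the genuine output of `M`) and that its
classes inject into the states of `M`.
-/

attribute [local instance] Classical.propDecidable

/-- A subsequential string transducer with input alphabet `σ` and output alphabet `γ`. -/
structure Transducer (σ : Type) (γ : Type) : Type 1 where
  Q : Type
  fin : Finite Q
  q0 : Q
  w0 : List γ
  δ : Q → σ → Option (Q × List γ)
  δF : Q → Option (List γ)

namespace Transducer

variable {σ γ : Type}

/-- The run relation `q →*^{u|w} q'`, as a function: from state `q`, reading `u`,
we reach the returned state producing the returned (concatenated) output. -/
def runFrom (M : Transducer σ γ) : M.Q → List σ → Option (M.Q × List γ)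
  | q, [] => some (q, [])
  | q, a :: u =>
    (M.δ q a).bind fun x =>
      (M.runFrom x.1 u).map fun y => (y.1, x.2 ++ y.2)

/-- The semantics `⟦M⟧` of a transducer, as a partial function `Σ* → Γ*`. -/
def sem (M : Transducer σ γ) (u : List σ) : Option (List γ) :=
  (M.runFrom M.q0 u).bind fun x => (M.δF x.1).map fun w' => M.w0 ++ x.2 ++ w'

/-- The number of states `|M|` of a transducer. -/
noncomputable def size (M : Transducer σ γ) : ℕ := Nat.card M.Q

/-- The run of `v` in `M` (from the initial state) uses the transition out of
state `q` reading letter `a`. -/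
def usesTransition (M : Transducer σ γ) (q : M.Q) (a : σ) (v : List σ) : Prop :=
  ∃ (vp vs : List σ) (w : List γ), v = vp ++ a :: vs ∧ M.runFrom M.q0 vp = some (q, w)

/-- Modify the transition function of `M` at `(q, a)`: replace it by `o`
(`o = none` deletes the transition, `o = some (q', w)` makes it `q →^{a|w} q'`). -/
noncomputable def modifyDelta (M : Transducer σ γ) (q : M.Q) (a : σ)
    (o : Option (M.Q × List γ)) : Transducer σ γ :=
  { M with δ := fun p b => if p = q ∧ b = a then o else M.δ p b }

/-- The product transducer `M × A` of a transducer and a DFA. -/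
noncomputable def prodDFA {Q : Type} [Finite Q] (M : Transducer σ γ) (A : DFA σ Q) :
    Transducer σ γ where
  Q := M.Q × Q
  fin := by have := M.fin; infer_instance
  q0 := (M.q0, A.start)
  w0 := M.w0
  δ := fun qp a => (M.δ qp.1 a).map fun x => ((x.1, A.step qp.2 a), x.2)
  δF := fun qp => if qp.2 ∈ A.accept then M.δF qp.1 else none

end Transducer

/-- A table entry: a word of `Γ*`, the wildcard `#`, or `⊥`. -/
inductive TVal (γ : Type) : Type where
  | word : List γ → TVal γ
  | hash : TVal γ
  | bot  : TVal γ

/-- An observation table for a target partial function `τ` with regular domain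
upper bound `Up`, based on a finite prefix-closed set `P` and a finite
suffix-closed set `S` (both containing `ε`). -/
structure ObsTable (σ γ : Type) where
  P : Finset (List σ)
  S : Finset (List σ)
  eps_mem_P : ([] : List σ) ∈ P
  eps_mem_S : ([] : List σ) ∈ S
  prefixClosed : ∀ u ∈ P, ∀ v : List σ, v <+: u → v ∈ P
  suffixClosed : ∀ u ∈ S, ∀ v : List σ, v <:+ u → v ∈ S
  Up : Language σ
  regular : ∃ (n : ℕ) (A : DFA σ (Fin n)), A.accepts = Up
  τ : List σ → Option (List γ)
  dom_subset : ∀ u : List σ, (τ u).isSome → u ∈ Up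

namespace ObsTable

variable {σ γ : Type}

/-- The set `P ∪ PΣ`. -/
def rowIdx (T : ObsTable σ γ) : Set (List σ) :=
  ↑T.P ∪ {x | ∃ p ∈ T.P, ∃ a : σ, x = p ++ [a]}

/-- The set `(P ∪ PΣ)·S` on which the table is defined. -/
def rows (T : ObsTable σ γ) : Set (List σ) :=
  {x | ∃ u ∈ T.rowIdx, ∃ v ∈ T.S, x = u ++ v}

/-- The table entry at `x`: `#` if `x ∉ Up`, `⊥` if `x ∈ Up ∖ dom τ`, and `τ x` otherwise. -/
noncomputable def val (T : ObsTable σ γ) (x : List σ) : TVal γ :=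
  if x ∈ T.Up then
    match T.τ x with
    | some w => TVal.word w
    | none => TVal.bot
  else TVal.hash

/-- `P_T`: the set of prefixes of elements of `(P ∪ PΣ)·S`. -/
def PT (T : ObsTable σ γ) : Set (List σ) := {u | ∃ x ∈ T.rows, u <+: x}

/-- `P_Γ`: those `u ∈ P_T` having an extension whose table entry is a word of `Γ*`. -/
def PGamma (T : ObsTable σ γ) : Set (List σ) :=
  {u | u ∈ T.PT ∧ ∃ v : List σ, u ++ v ∈ T.rows ∧ ∃ w, T.val (u ++ v) = TVal.word w}

/-- A transducer `M` is compatible with the table `T`. -/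
def Compatible (T : ObsTable σ γ) (M : Transducer σ γ) : Prop :=
  ∀ x ∈ T.rows,
    (∀ w, T.val x = TVal.word w → M.sem x = some w) ∧
    (T.val x = TVal.bot → M.sem x = none)

lemma rowIdx_finite [Finite σ] (T : ObsTable σ γ) : T.rowIdx.Finite := by
  refine Set.Finite.union T.P.finite_toSet ?_
  have h : {x : List σ | ∃ p ∈ T.P, ∃ a : σ, x = p ++ [a]}
      ⊆ (fun pa : List σ × σ => pa.1 ++ [pa.2]) '' ((↑T.P : Set (List σ)) ×ˢ (Set.univ : Set σ)) := by
    rintro x ⟨p, hp, a, rfl⟩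
    exact ⟨(p, a), ⟨hp, trivial⟩, rfl⟩
  exact ((T.P.finite_toSet.prod Set.finite_univ).image _).subset h

lemma rows_finite [Finite σ] (T : ObsTable σ γ) : T.rows.Finite := by
  have h : T.rows ⊆ (fun uv : List σ × List σ => uv.1 ++ uv.2) '' (T.rowIdx ×ˢ (↑T.S : Set (List σ))) := by
    rintro x ⟨u, hu, v, hv, rfl⟩
    exact ⟨(u, v), ⟨hu, hv⟩, rfl⟩
  exact (((rowIdx_finite T).prod T.S.finite_toSet).image _).subset h

lemma PT_finite [Finite σ] (T : ObsTable σ γ) : T.PT.Finite := by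
  have h : T.PT ⊆ ⋃ x ∈ T.rows, {u : List σ | u ∈ x.inits} := by
    rintro u ⟨x, hx, hpre⟩
    exact Set.mem_biUnion hx (by simpa [List.mem_inits] using hpre)
  refine (Set.Finite.biUnion (rows_finite T) fun x _ => ?_).subset h
  exact x.inits.finite_toSet

end ObsTable

/-- A merging map `(≡, f)` on an observation table `T`. -/
structure MergingMap {σ γ : Type} (T : ObsTable σ γ) where
  rel : List σ → List σ → Prop
  f : List σ → Option (List γ)
  rel_mem : ∀ u v : List σ, rel u v → u ∈ T.PT ∧ v ∈ T.PT
  rel_refl : ∀ u ∈ T.PT, rel u u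
  rel_symm : ∀ {u v : List σ}, rel u v → rel v u
  rel_trans : ∀ {u v w : List σ}, rel u v → rel v w → rel u w
  f_mem : ∀ u : List σ, (f u).isSome → u ∈ T.PT
  cond1 : ∀ u v : List σ, f u = none → rel u v → f v = none
  cond2 : ∀ (u v : List σ) (w : List γ), u ∈ T.PT → u ++ v ∈ T.rows →
    T.val (u ++ v) = TVal.word w → ∃ x, f u = some x ∧ x <+: w
  cond3 : ∀ (u : List σ) (a : σ) (w : List γ), f (u ++ [a]) = some w →
    ∃ x, f u = some x ∧ x <+: w
  cond4 : ∀ (u u' : List σ) (a : σ) (wu : List γ), f u = some wu → rel u u' →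
    u ++ [a] ∈ T.PT → u' ++ [a] ∈ T.PT →
    rel (u ++ [a]) (u' ++ [a]) ∧
    ∀ wua, f (u ++ [a]) = some wua →
      ∃ (wu' x : List γ), f u' = some wu' ∧ wua = wu ++ x ∧ f (u' ++ [a]) = some (wu' ++ x)
  cond5 : ∀ (u u' : List σ) (w : List γ), u ∈ T.rows → T.val u = TVal.word w → rel u u' →
    (u' ∈ T.rows → T.val u' ≠ TVal.bot) ∧
    ∀ w', u' ∈ T.rows → T.val u' = TVal.word w' →
      ∃ (x fu fu' : List γ), f u = some fu ∧ f u' = some fu' ∧ w = fu ++ x ∧ w' = fu' ++ x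
  cond6 : ∀ (u : List σ) (a : σ), (f (u ++ [a])).isSome →
    (¬ ∃ v, rel u v ∧ v ++ [a] ∈ T.PGamma) → f (u ++ [a]) = f u

namespace MergingMap

variable {σ γ : Type} {T : ObsTable σ γ}

/-- The `≡`-class of `u`. -/
def cls (m : MergingMap T) (u : List σ) : Set (List σ) := {v | m.rel u v}

/-- The set of `≡`-classes meeting `dom f`. -/
def classes (m : MergingMap T) : Set (Set (List σ)) :=
  {C | ∃ u : List σ, (m.f u).isSome ∧ C = m.cls u}

/-- The size of a merging map: the number of `≡`-classes meeting `dom f`. -/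
noncomputable def size (m : MergingMap T) : ℕ := m.classes.ncard

lemma cls_mem_classes (m : MergingMap T) {u : List σ} (h : (m.f u).isSome) :
    m.cls u ∈ m.classes := ⟨u, h, rfl⟩

lemma classes_finite [Finite σ] (m : MergingMap T) : m.classes.Finite := by
  have h : m.classes ⊆ m.cls '' T.PT := by
    rintro C ⟨u, hu, rfl⟩
    exact ⟨u, m.f_mem u hu, rfl⟩
  exact ((T.PT_finite).image _).subset h

/-- A muted pair `(u, a)` of a merging map. -/
def Muted (m : MergingMap T) (u : List σ) (a : σ) : Prop :=
  (m.f u).isSome ∧ (m.f (u ++ [a])).isSome ∧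
    ¬ ∃ v, m.rel u v ∧ v ++ [a] ∈ T.PGamma

/-- An open end `(u, a)` of a merging map. -/
def OpenEnd (m : MergingMap T) (u : List σ) (a : σ) : Prop :=
  u ∈ T.PT ∧ ¬ ∃ v, m.rel u v ∧ v ++ [a] ∈ T.PT

/-- The transducer resulting from a merging map (assuming `f ε` is defined,
so that the initial state exists). -/
noncomputable def resulting [Finite σ] (m : MergingMap T) (h0 : (m.f []).isSome) :
    Transducer σ γ where
  Q := {C : Set (List σ) // C ∈ m.classes}
  fin := m.classes_finite.to_subtype
  q0 := ⟨m.cls [], m.cls_mem_classes h0⟩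
  w0 := (m.f []).get h0
  δ := fun q a =>
    if h : ∃ u : List σ, (m.f u).isSome ∧ (m.f (u ++ [a])).isSome ∧ q.1 = m.cls u then
      some (⟨m.cls (h.choose ++ [a]), m.cls_mem_classes h.choose_spec.2.1⟩,
        ((m.f (h.choose ++ [a])).get h.choose_spec.2.1).drop
          ((m.f h.choose).get h.choose_spec.1).length)
    else none
  δF := fun q =>
    if h : ∃ u : List σ, (m.f u).isSome ∧ q.1 = m.cls u ∧ u ∈ T.rows ∧
        ∃ w, T.val u = TVal.word w then
      some (h.choose_spec.2.2.2.choose.drop ((m.f h.choose).get h.choose_spec.1).length)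
    else none

/-- The state `q_u` of the resulting transducer associated with `u ∈ dom f`. -/
noncomputable def state [Finite σ] (m : MergingMap T) (h0 : (m.f []).isSome)
    {u : List σ} (h : (m.f u).isSome) : (m.resulting h0).Q :=
  ⟨m.cls u, m.cls_mem_classes h⟩

/-- An open completion of a merging map, determined by a choice `g` of added
transitions (which, when used, must only be added at open ends, with output `ε`). -/
noncomputable def openCompletion [Finite σ] (m : MergingMap T) (h0 : (m.f []).isSome)
    (g : (m.resulting h0).Q → σ → Option ((m.resulting h0).Q)) : Transducer σ γ :=
  { m.resulting h0 with
    δ := fun q a =>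
      match (m.resulting h0).δ q a with
      | some x => some x
      | none => (g q a).map fun q' => (q', ([] : List γ)) }

/-- The choice `g` of added transitions only adds transitions at open ends. -/
def ValidOpenChoice [Finite σ] (m : MergingMap T) (h0 : (m.f []).isSome)
    (g : (m.resulting h0).Q → σ → Option ((m.resulting h0).Q)) : Prop :=
  ∀ (q : (m.resulting h0).Q) (a : σ), (g q a).isSome →
    ∃ u : List σ, q.1 = m.cls u ∧ m.OpenEnd u a

/-- The run of `x` in the open completion uses a muted or an open transition. -/
def usesMutedOrOpen [Finite σ] (m : MergingMap T) (h0 : (m.f []).isSome)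
    (g : (m.resulting h0).Q → σ → Option ((m.resulting h0).Q)) (x : List σ) : Prop :=
  ∃ (vp : List σ) (a : σ) (vs : List σ) (q : (m.resulting h0).Q) (w : List γ),
    x = vp ++ a :: vs ∧
    (m.openCompletion h0 g).runFrom (m.openCompletion h0 g).q0 vp = some (q, w) ∧
    ((∃ u, q.1 = m.cls u ∧ m.Muted u a) ∨ (m.resulting h0).δ q a = none)

end MergingMap

/-- The equivalence on `P_T` induced by a transducer: two words are related when
they reach the same state of `M` (or both fail to have a run). -/
def inducedRel {σ γ : Type} (M : Transducer σ γ) (T : ObsTable σ γ) (u v : List σ) : Prop :=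
  u ∈ T.PT ∧ v ∈ T.PT ∧
    (M.runFrom M.q0 u).map Prod.fst = (M.runFrom M.q0 v).map Prod.fst

/-- Helper for the induced partial output function: walk through the word,
appending the transition output only when the step leads into `P_Γ` for
some equivalent word. -/
noncomputable def goF {σ γ : Type} (M : Transducer σ γ) (T : ObsTable σ γ) :
    M.Q → List γ → List σ → Option (List γ)
  | _, acc, [] => some acc
  | q, acc, a :: rest =>
    (M.δ q a).bind fun x =>
      goF M T x.1
        (if ∃ v ∈ T.PT, (M.runFrom M.q0 v).map Prod.fst = some q ∧ v ++ [a] ∈ T.PGamma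
          then acc ++ x.2 else acc) rest

/-- The partial output function induced by a transducer on `P_T`. -/
noncomputable def inducedF {σ γ : Type} (M : Transducer σ γ) (T : ObsTable σ γ)
    (u : List σ) : Option (List γ) :=
  if u ∈ T.PT then goF M T M.q0 M.w0 u else none

namespace Transducer

variable {σ γ : Type} (M : Transducer σ γ)

lemma runFrom_append (q : M.Q) (u v : List σ) :
    M.runFrom q (u ++ v) =
      (M.runFrom q u).bind fun p => (M.runFrom p.1 v).map fun y => (y.1, p.2 ++ y.2) := by
  induction u generalizing q with
  | nil => simp [runFrom]
  | cons a u ih =>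
    simp only [List.cons_append, runFrom, ih]
    cases M.δ q a with
    | none => rfl
    | some x =>
      simp only [Option.bind_some]
      cases M.runFrom x.1 u with
      | none => rfl
      | some p => simp [Option.map_map, Function.comp_def]

lemma runFrom_snoc (q : M.Q) (u : List σ) (a : σ) :
    M.runFrom q (u ++ [a]) =
      (M.runFrom q u).bind fun p => (M.δ p.1 a).map fun x => (x.1, p.2 ++ x.2) := by
  rw [runFrom_append]
  congr 1
  funext p
  simp only [runFrom]
  cases M.δ p.1 a <;> simp

lemma runFrom_snoc_map_fst (q : M.Q) (u : List σ) (a : σ) :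
    (M.runFrom q (u ++ [a])).map Prod.fst =
      ((M.runFrom q u).map Prod.fst).bind fun p => (M.δ p a).map Prod.fst := by
  rw [runFrom_snoc]
  cases M.runFrom q u with
  | none => rfl
  | some p => simp [Option.map_map, Function.comp_def]

lemma isSome_runFrom_of_append {q : M.Q} {u v : List σ}
    (h : (M.runFrom q (u ++ v)).isSome) : (M.runFrom q u).isSome := by
  rw [runFrom_append] at h
  cases hu : M.runFrom q u
  · simp [hu] at h
  · rfl

lemma sem_eq_some_iff {x : List σ} {w : List γ} :
    M.sem x = some w ↔
      ∃ p wf, M.runFrom M.q0 x = some p ∧ M.δF p.1 = some wf ∧ w = M.w0 ++ p.2 ++ wf := by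
  simp only [sem, Option.bind_eq_some_iff, Option.map_eq_some_iff]
  constructor
  · rintro ⟨p, hp, wf, hwf, rfl⟩
    exact ⟨p, wf, hp, hwf, rfl⟩
  · rintro ⟨p, wf, hp, hwf, rfl⟩
    exact ⟨p, hp, wf, hwf, rfl⟩

end Transducer

namespace ObsTable

variable {σ γ : Type} (T : ObsTable σ γ)

lemma mem_PT_of_mem_rows {x : List σ} (hx : x ∈ T.rows) : x ∈ T.PT :=
  ⟨x, hx, List.prefix_refl x⟩

lemma mem_PT_of_prefix {u v : List σ} (hu : u ∈ T.PT) (hv : v <+: u) : v ∈ T.PT := by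
  obtain ⟨x, hx, hux⟩ := hu
  exact ⟨x, hx, hv.trans hux⟩

lemma nil_mem_rows : ([] : List σ) ∈ T.rows :=
  ⟨[], Or.inl T.eps_mem_P, [], T.eps_mem_S, rfl⟩

lemma nil_mem_PT : ([] : List σ) ∈ T.PT :=
  T.mem_PT_of_mem_rows T.nil_mem_rows

lemma mem_PGamma_of_append {u t : List σ} (h : u ++ t ∈ T.PGamma) : u ∈ T.PGamma := by
  obtain ⟨hPT, v, hrow, w, hw⟩ := h
  refine ⟨T.mem_PT_of_prefix hPT (List.prefix_append u t), t ++ v, ?_, w, ?_⟩ <;>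
    rwa [← List.append_assoc]

lemma mem_PGamma_of_mem_rows {x : List σ} {w : List γ} (hx : x ∈ T.rows)
    (hw : T.val x = TVal.word w) : x ∈ T.PGamma :=
  ⟨T.mem_PT_of_mem_rows hx, [], by rwa [List.append_nil], w, by rwa [List.append_nil]⟩

end ObsTable

namespace MergingMap

variable {σ γ : Type} {T : ObsTable σ γ} (m : MergingMap T)

lemma cls_eq_of_rel {u v : List σ} (h : m.rel u v) : m.cls u = m.cls v :=
  Set.ext fun _ => ⟨m.rel_trans (m.rel_symm h), m.rel_trans h⟩

lemma rel_of_cls_eq {u v : List σ} (hv : v ∈ T.PT) (h : m.cls u = m.cls v) : m.rel u v := by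
  have : v ∈ m.cls v := m.rel_refl v hv
  rwa [← h] at this

lemma f_nil_prefix {u : List σ} {w : List γ} (hu : m.f u = some w) :
    ∃ w₀, m.f [] = some w₀ ∧ w₀ <+: w := by
  induction u using List.reverseRecOn generalizing w with
  | nil => exact ⟨w, hu, List.prefix_refl w⟩
  | append_singleton u a ih =>
    obtain ⟨x, hx, hxw⟩ := m.cond3 u a w hu
    obtain ⟨w₀, h₀, hw₀⟩ := ih hx
    exact ⟨w₀, h₀, hw₀.trans hxw⟩

/-- Condition (4) read along a class: a transition out of `q_u` found at another
representative `v` already exists at `u`, with the same target and output. -/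
lemma f_snoc_of_rel {u v : List σ} {a : σ} {wu wv wva : List γ} (hrel : m.rel u v)
    (hPT : u ++ [a] ∈ T.PT) (hu : m.f u = some wu) (hv : m.f v = some wv)
    (hva : m.f (v ++ [a]) = some wva) :
    ∃ wua, m.f (u ++ [a]) = some wua ∧ m.cls (v ++ [a]) = m.cls (u ++ [a]) ∧
      wva.drop wv.length = wua.drop wu.length := by
  have hvaPT := m.f_mem _ (Option.isSome_of_eq_some hva)
  obtain ⟨hrel', hf⟩ := m.cond4 v u a wv hv (m.rel_symm hrel) hvaPT hPT
  obtain ⟨wu', c, hu', rfl, hua⟩ := hf wva hva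
  rw [hu, Option.some_inj] at hu'
  subst hu'
  exact ⟨wu ++ c, hua, m.cls_eq_of_rel hrel', by simp⟩

variable [Finite σ] (h0 : (m.f []).isSome)

lemma resulting_δ_state {u : List σ} {a : σ} {wu wua : List γ} (hu : m.f u = some wu)
    (hua : m.f (u ++ [a]) = some wua) :
    (m.resulting h0).δ (m.state h0 (Option.isSome_of_eq_some hu)) a =
      some (m.state h0 (Option.isSome_of_eq_some hua), wua.drop wu.length) := by
  have hex : ∃ v, (m.f v).isSome ∧ (m.f (v ++ [a])).isSome ∧ m.cls u = m.cls v :=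
    ⟨u, Option.isSome_of_eq_some hu, Option.isSome_of_eq_some hua, rfl⟩
  simp only [resulting, state, dif_pos hex]
  obtain ⟨hv, hva, hcls⟩ := hex.choose_spec
  obtain ⟨wua', hua', hcls', hdrop⟩ :=
    m.f_snoc_of_rel (m.rel_of_cls_eq (m.f_mem _ hv) hcls) (m.f_mem _ (Option.isSome_of_eq_some hua))
      hu (Option.eq_some_of_isSome hv) (Option.eq_some_of_isSome hva)
  rw [hua, Option.some_inj] at hua'
  subst hua'
  rw [hdrop]
  congr 2
  exact Subtype.ext hcls'

lemma resulting_δ_state_eq_none {u : List σ} {a : σ} (hu : (m.f u).isSome)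
    (hPT : u ++ [a] ∈ T.PT) (hua : m.f (u ++ [a]) = none) :
    (m.resulting h0).δ (m.state h0 hu) a = none := by
  simp only [resulting, state]
  rw [dif_neg]
  rintro ⟨v, hv, hva, hcls⟩
  obtain ⟨_, hua', -⟩ := m.f_snoc_of_rel (m.rel_of_cls_eq (m.f_mem _ hv) hcls) hPT
    (Option.eq_some_of_isSome hu) (Option.eq_some_of_isSome hv) (Option.eq_some_of_isSome hva)
  simp [hua] at hua'

lemma resulting_runFrom_of_f_eq_some {x : List σ} {w : List γ} (hx : m.f x = some w) :
    (m.resulting h0).runFrom (m.resulting h0).q0 x =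
      some (m.state h0 (Option.isSome_of_eq_some hx), w.drop ((m.f []).get h0).length) := by
  induction x using List.reverseRecOn generalizing w with
  | nil =>
    rw [Option.get_of_eq_some h0 hx, List.drop_length]
    rfl
  | append_singleton u a ih =>
    obtain ⟨wu, hu, c, rfl⟩ := m.cond3 u a w hx
    obtain ⟨w₀, h₀, c₀, rfl⟩ := m.f_nil_prefix hu
    rw [Transducer.runFrom_snoc, ih hu, Option.bind_some, m.resulting_δ_state h0 hu hx]
    simp [Option.get_of_eq_some h0 h₀]

lemma resulting_runFrom_eq_none {x : List σ} (hx : x ∈ T.PT) (hfx : m.f x = none) :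
    (m.resulting h0).runFrom (m.resulting h0).q0 x = none := by
  induction x using List.reverseRecOn with
  | nil => simp [hfx] at h0
  | append_singleton u a ih =>
    rw [Transducer.runFrom_snoc]
    cases hu : m.f u with
    | none => rw [ih (T.mem_PT_of_prefix hx (List.prefix_append u [a])) hu]; rfl
    | some wu =>
      rw [m.resulting_runFrom_of_f_eq_some h0 hu, Option.bind_some,
        m.resulting_δ_state_eq_none h0 _ hx hfx]
      rfl

lemma resulting_δF_state_of_word {x : List σ} {wx w : List γ} (hx : m.f x = some wx)
    (hrow : x ∈ T.rows) (hw : T.val x = TVal.word w) :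
    (m.resulting h0).δF (m.state h0 (Option.isSome_of_eq_some hx)) = some (w.drop wx.length) := by
  have hex : ∃ u, (m.f u).isSome ∧ m.cls x = m.cls u ∧ u ∈ T.rows ∧
      ∃ w', T.val u = TVal.word w' :=
    ⟨x, Option.isSome_of_eq_some hx, rfl, hrow, w, hw⟩
  simp only [resulting, state, dif_pos hex]
  obtain ⟨hu, hcls, hurow, hex'⟩ := hex.choose_spec
  obtain ⟨-, hf⟩ := m.cond5 _ x _ hurow hex'.choose_spec
    (m.rel_symm (m.rel_of_cls_eq (m.f_mem _ hu) hcls))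
  obtain ⟨c, fu, fx, hfu, hfx, hu', rfl⟩ := hf w hrow hw
  rw [hx, Option.some_inj] at hfx
  subst hfx
  rw [Option.get_of_eq_some hu hfu, hu']
  simp

lemma resulting_δF_state_of_bot {x : List σ} (hx : (m.f x).isSome) (hrow : x ∈ T.rows)
    (hb : T.val x = TVal.bot) : (m.resulting h0).δF (m.state h0 hx) = none := by
  simp only [resulting, state]
  rw [dif_neg]
  rintro ⟨u, hu, hcls, hurow, w', hw'⟩
  exact (m.cond5 u x w' hurow hw' (m.rel_symm (m.rel_of_cls_eq (m.f_mem _ hu) hcls))).1 hrow hb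

theorem compatible_resulting : T.Compatible (m.resulting h0) := by
  intro x hrow
  refine ⟨fun w hw => ?_, fun hb => ?_⟩
  · obtain ⟨wx, hx, c, rfl⟩ := m.cond2 x [] w (T.mem_PT_of_mem_rows hrow)
      (by rwa [List.append_nil]) (by rwa [List.append_nil])
    obtain ⟨w₀, h₀, c₀, rfl⟩ := m.f_nil_prefix hx
    simp only [Transducer.sem, m.resulting_runFrom_of_f_eq_some h0 hx, Option.bind_some,
      m.resulting_δF_state_of_word h0 hx hrow hw, Option.map_some]
    simp [resulting, Option.get_of_eq_some h0 h₀]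
  · cases hx : m.f x with
    | none => simp [Transducer.sem, m.resulting_runFrom_eq_none h0 (T.mem_PT_of_mem_rows hrow) hx]
    | some wx =>
      simp [Transducer.sem, m.resulting_runFrom_of_f_eq_some h0 hx,
        m.resulting_δF_state_of_bot h0 _ hrow hb]

end MergingMap

section Induced

variable {σ γ : Type} (M : Transducer σ γ) (T : ObsTable σ γ)

/-- The test inside `goF`, deciding whether the output of `q →^a` is kept. -/
def StepsIntoPGamma (q : M.Q) (a : σ) : Prop :=
  ∃ v ∈ T.PT, (M.runFrom M.q0 v).map Prod.fst = some q ∧ v ++ [a] ∈ T.PGamma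

lemma goF_cons (q : M.Q) (acc : List γ) (a : σ) (u : List σ) :
    goF M T q acc (a :: u) =
      (M.δ q a).bind fun x =>
        goF M T x.1 (if StepsIntoPGamma M T q a then acc ++ x.2 else acc) u := rfl

lemma isSome_goF (u : List σ) (q : M.Q) (acc : List γ) :
    (goF M T q acc u).isSome = (M.runFrom q u).isSome := by
  induction u generalizing q acc with
  | nil => rfl
  | cons a u ih =>
    rw [goF_cons, Transducer.runFrom]
    cases M.δ q a with
    | none => rfl
    | some x => simp only [Option.bind_some, ih, Option.isSome_map]

lemma goF_snoc (u : List σ) (a : σ) (q : M.Q) (acc : List γ) :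
    goF M T q acc (u ++ [a]) =
      (M.runFrom q u).bind fun p => (goF M T q acc u).bind fun w =>
        (M.δ p.1 a).map fun x => w ++ if StepsIntoPGamma M T p.1 a then x.2 else [] := by
  induction u generalizing q acc with
  | nil =>
    rw [List.nil_append, goF_cons]
    cases hδ : M.δ q a with
    | none => simp [hδ, Transducer.runFrom]
    | some x => by_cases h : StepsIntoPGamma M T q a <;> simp [h, hδ, goF, Transducer.runFrom]
  | cons b u ih =>
    rw [List.cons_append, goF_cons, goF_cons, Transducer.runFrom]
    cases M.δ q b with
    | none => rfl
    | some x =>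
      simp only [Option.bind_some, ih]
      cases M.runFrom x.1 u <;> simp

lemma inducedF_nil : inducedF M T [] = some M.w0 := by
  simp [inducedF, T.nil_mem_PT, goF]

lemma isSome_inducedF_iff {u : List σ} :
    (inducedF M T u).isSome ↔ u ∈ T.PT ∧ (M.runFrom M.q0 u).isSome := by
  unfold inducedF
  split_ifs with hu
  · simp [hu, isSome_goF]
  · simp [hu]

lemma inducedF_snoc_of_step {u : List σ} {a : σ} {p x : M.Q × List γ}
    (hPT : u ++ [a] ∈ T.PT) (hp : M.runFrom M.q0 u = some p) (hx : M.δ p.1 a = some x) :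
    ∃ w, inducedF M T u = some w ∧
      inducedF M T (u ++ [a]) = some (w ++ if StepsIntoPGamma M T p.1 a then x.2 else []) := by
  have hu : u ∈ T.PT := T.mem_PT_of_prefix hPT (List.prefix_append u [a])
  obtain ⟨w, hw⟩ := Option.isSome_iff_exists.mp ((isSome_inducedF_iff M T).mpr ⟨hu, by simp [hp]⟩)
  refine ⟨w, hw, ?_⟩
  simp only [inducedF, if_pos hu] at hw
  simp [inducedF, if_pos hPT, goF_snoc, hp, hw, hx]

lemma exists_step_of_inducedF_snoc {u : List σ} {a : σ} {z : List γ}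
    (h : inducedF M T (u ++ [a]) = some z) :
    ∃ p x w, M.runFrom M.q0 u = some p ∧ M.δ p.1 a = some x ∧ inducedF M T u = some w ∧
      z = w ++ if StepsIntoPGamma M T p.1 a then x.2 else [] := by
  obtain ⟨hPT, hrun⟩ := (isSome_inducedF_iff M T).mp (Option.isSome_of_eq_some h)
  obtain ⟨px, hpx⟩ := Option.isSome_iff_exists.mp hrun
  rw [Transducer.runFrom_snoc, Option.bind_eq_some_iff] at hpx
  obtain ⟨p, hp, hpx⟩ := hpx
  obtain ⟨x, hx, -⟩ := Option.map_eq_some_iff.mp hpx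
  obtain ⟨w, hw, hz⟩ := inducedF_snoc_of_step M T hPT hp hx
  exact ⟨p, x, w, hp, hx, hw, Option.some_inj.mp (h.symm.trans hz)⟩

variable {M T}

lemma inducedRel_snoc {u v : List σ} {a : σ} (h : inducedRel M T u v) (hu : u ++ [a] ∈ T.PT)
    (hv : v ++ [a] ∈ T.PT) : inducedRel M T (u ++ [a]) (v ++ [a]) :=
  ⟨hu, hv, by rw [Transducer.runFrom_snoc_map_fst, Transducer.runFrom_snoc_map_fst, h.2.2]⟩

lemma exists_runFrom_of_inducedRel {u v : List σ} {p : M.Q × List γ} (h : inducedRel M T u v)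
    (hp : M.runFrom M.q0 u = some p) : ∃ p', M.runFrom M.q0 v = some p' ∧ p'.1 = p.1 := by
  have h' := h.2.2
  rw [hp, Option.map_some, eq_comm, Option.map_eq_some_iff] at h'
  exact h'

/-- Along a word of `P_Γ` every step passes the test of `StepsIntoPGamma`, so `f`
is the whole output of `M`. -/
lemma inducedF_of_mem_PGamma (hM : T.Compatible M) {u : List σ} (hu : u ∈ T.PGamma) :
    ∃ p, M.runFrom M.q0 u = some p ∧ inducedF M T u = some (M.w0 ++ p.2) := by
  induction u using List.reverseRecOn with
  | nil => exact ⟨(M.q0, []), rfl, by simpa using inducedF_nil M T⟩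
  | append_singleton u a ih =>
    obtain ⟨p, hp, hfu⟩ := ih (T.mem_PGamma_of_append hu)
    obtain ⟨hPT, t, hrow, w, hw⟩ := hu
    obtain ⟨px, -, hpx, -, -⟩ := M.sem_eq_some_iff.mp ((hM _ hrow).1 w hw)
    have hrun := M.isSome_runFrom_of_append (Option.isSome_of_eq_some hpx)
    rw [Transducer.runFrom_snoc, hp, Option.bind_some, Option.isSome_map] at hrun
    obtain ⟨x, hx⟩ := Option.isSome_iff_exists.mp hrun
    have hstep : StepsIntoPGamma M T p.1 a :=
      ⟨u, T.mem_PT_of_prefix hPT (List.prefix_append u [a]), by simp [hp],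
        hPT, t, hrow, w, hw⟩
    obtain ⟨w', hw', hfua⟩ := inducedF_snoc_of_step M T hPT hp hx
    rw [hfu, Option.some_inj] at hw'
    subst hw'
    refine ⟨(x.1, p.2 ++ x.2), by simp [Transducer.runFrom_snoc, hp, hx], ?_⟩
    simp [hfua, hstep]

lemma inducedF_eq_none_of_inducedRel {u v : List σ} (hu : inducedF M T u = none)
    (h : inducedRel M T u v) : inducedF M T v = none := by
  rw [← Option.not_isSome_iff_eq_none, isSome_inducedF_iff] at hu ⊢
  rintro ⟨-, hv⟩
  refine hu ⟨h.1, ?_⟩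
  rw [← Option.isSome_map (f := Prod.fst), h.2.2, Option.isSome_map]
  exact hv

lemma inducedF_prefix_of_val_eq_word (hM : T.Compatible M) {u v : List σ} {w : List γ}
    (hu : u ∈ T.PT) (hrow : u ++ v ∈ T.rows) (hw : T.val (u ++ v) = TVal.word w) :
    ∃ x, inducedF M T u = some x ∧ x <+: w := by
  obtain ⟨p, hp, hfu⟩ := inducedF_of_mem_PGamma hM ⟨hu, v, hrow, w, hw⟩
  obtain ⟨px, wf, hpx, -, rfl⟩ := M.sem_eq_some_iff.mp ((hM _ hrow).1 w hw)
  rw [Transducer.runFrom_append, hp, Option.bind_some, Option.map_eq_some_iff] at hpx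
  obtain ⟨y, -, rfl⟩ := hpx
  exact ⟨_, hfu, y.2 ++ wf, by simp⟩

lemma inducedF_snoc_of_inducedRel {u u' : List σ} {a : σ} {wu wua : List γ}
    (hu : inducedF M T u = some wu) (h : inducedRel M T u u') (hu'a : u' ++ [a] ∈ T.PT)
    (hua : inducedF M T (u ++ [a]) = some wua) :
    ∃ wu' c, inducedF M T u' = some wu' ∧ wua = wu ++ c ∧
      inducedF M T (u' ++ [a]) = some (wu' ++ c) := by
  obtain ⟨p, x, w, hp, hx, hw, rfl⟩ := exists_step_of_inducedF_snoc M T hua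
  rw [hu, Option.some_inj] at hw
  subst hw
  obtain ⟨p', hp', hpp⟩ := exists_runFrom_of_inducedRel h hp
  obtain ⟨wu', hwu', hfu'a⟩ := inducedF_snoc_of_step M T hu'a hp' (hpp ▸ hx)
  exact ⟨wu', _, hwu', rfl, by rw [hfu'a, hpp]⟩

lemma inducedF_residual_eq_of_inducedRel (hM : T.Compatible M) {u u' : List σ} {w : List γ}
    (hrow : u ∈ T.rows) (hw : T.val u = TVal.word w) (h : inducedRel M T u u') :
    (u' ∈ T.rows → T.val u' ≠ TVal.bot) ∧
      ∀ w', u' ∈ T.rows → T.val u' = TVal.word w' →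
        ∃ c fu fu', inducedF M T u = some fu ∧ inducedF M T u' = some fu' ∧
          w = fu ++ c ∧ w' = fu' ++ c := by
  obtain ⟨p, wf, hp, hwf, rfl⟩ := M.sem_eq_some_iff.mp ((hM u hrow).1 _ hw)
  obtain ⟨p', hp', hpp⟩ := exists_runFrom_of_inducedRel h hp
  have hsem' : M.sem u' = some (M.w0 ++ p'.2 ++ wf) :=
    M.sem_eq_some_iff.mpr ⟨p', wf, hp', hpp ▸ hwf, rfl⟩
  refine ⟨fun hrow' hb => by simp [(hM u' hrow').2 hb] at hsem', fun w' hrow' hw' => ?_⟩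
  obtain ⟨q, hq, hfu⟩ := inducedF_of_mem_PGamma hM (T.mem_PGamma_of_mem_rows hrow hw)
  obtain ⟨q', hq', hfu'⟩ := inducedF_of_mem_PGamma hM (T.mem_PGamma_of_mem_rows hrow' hw')
  rw [hp, Option.some_inj] at hq
  rw [hp', Option.some_inj] at hq'
  subst hq hq'
  rw [(hM u' hrow').1 w' hw', Option.some_inj] at hsem'
  exact ⟨wf, _, _, hfu, hfu', by simp, by simp [hsem']⟩

lemma inducedF_snoc_eq_of_muted {u : List σ} {a : σ}
    (hua : (inducedF M T (u ++ [a])).isSome)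
    (hmuted : ¬ ∃ v, inducedRel M T u v ∧ v ++ [a] ∈ T.PGamma) :
    inducedF M T (u ++ [a]) = inducedF M T u := by
  obtain ⟨z, hz⟩ := Option.isSome_iff_exists.mp hua
  obtain ⟨p, x, w, hp, -, hw, rfl⟩ := exists_step_of_inducedF_snoc M T hz
  have huPT := T.mem_PT_of_prefix ((isSome_inducedF_iff M T).mp hua).1 (List.prefix_append u [a])
  have hstep : ¬ StepsIntoPGamma M T p.1 a := fun ⟨v, hv, hvq, hva⟩ =>
    hmuted ⟨v, ⟨huPT, hv, by rw [hp, hvq]; rfl⟩, hva⟩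
  rw [hz, hw, if_neg hstep, List.append_nil]

end Induced

noncomputable def inducedMM {σ γ : Type} {T : ObsTable σ γ} {M : Transducer σ γ}
    (hM : T.Compatible M) : MergingMap T where
  rel := inducedRel M T
  f := inducedF M T
  rel_mem _ _ h := ⟨h.1, h.2.1⟩
  rel_refl _ hu := ⟨hu, hu, rfl⟩
  rel_symm h := ⟨h.2.1, h.1, h.2.2.symm⟩
  rel_trans h h' := ⟨h.1, h'.2.1, h.2.2.trans h'.2.2⟩
  f_mem _ h := ((isSome_inducedF_iff M T).mp h).1
  cond1 _ _ := inducedF_eq_none_of_inducedRel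
  cond2 _ _ _ hu hrow hw := inducedF_prefix_of_val_eq_word hM hu hrow hw
  cond3 u a w h := by
    obtain ⟨-, -, wu, -, -, hwu, rfl⟩ := exists_step_of_inducedF_snoc M T h
    exact ⟨wu, hwu, List.prefix_append _ _⟩
  cond4 _ _ _ _ hu h hua hu'a :=
    ⟨inducedRel_snoc h hua hu'a, fun _ => inducedF_snoc_of_inducedRel hu h hu'a⟩
  cond5 _ _ _ hrow hw h := inducedF_residual_eq_of_inducedRel hM hrow hw h
  cond6 _ _ := inducedF_snoc_eq_of_muted

lemma isSome_inducedMM_f_nil {σ γ : Type} {T : ObsTable σ γ} {M : Transducer σ γ}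
    (hM : T.Compatible M) : ((inducedMM hM).f []).isSome :=
  Option.isSome_of_eq_some (inducedF_nil M T)

/-- Sending each class to the state of `M` reached by its members is injective. -/
lemma size_resulting_inducedMM_le {σ γ : Type} [Finite σ] {T : ObsTable σ γ}
    {M : Transducer σ γ} (hM : T.Compatible M) (h0 : ((inducedMM hM).f []).isSome) :
    ((inducedMM hM).resulting h0).size ≤ M.size := by
  have : Finite M.Q := M.fin
  have hreach : ∀ C : ((inducedMM hM).resulting h0).Q, ∃ q : M.Q, ∃ u,
      (inducedF M T u).isSome ∧ C.1 = (inducedMM hM).cls u ∧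
        (M.runFrom M.q0 u).map Prod.fst = some q := by
    rintro ⟨C, u, hu, rfl⟩
    obtain ⟨p, hp⟩ := Option.isSome_iff_exists.mp ((isSome_inducedF_iff M T).mp hu).2
    exact ⟨p.1, u, hu, rfl, by simp [hp]⟩
  choose reach rep hrep hcls hrun using hreach
  refine Nat.card_le_card_of_injective reach fun C C' h => Subtype.ext ?_
  rw [hcls C, hcls C']
  exact (inducedMM hM).cls_eq_of_rel ⟨((isSome_inducedF_iff M T).mp (hrep C)).1,
    ((isSome_inducedF_iff M T).mp (hrep C')).1, by rw [hrun, hrun, h]⟩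

theorem exists_resulting_compatible_le_general {σ γ : Type} [Finite σ]
    (T : ObsTable σ γ) (M : Transducer σ γ) (hM : T.Compatible M) :
    ∃ (m : MergingMap T) (h0 : (m.f []).isSome = true),
      T.Compatible (m.resulting h0) ∧ (m.resulting h0).size ≤ M.size :=
  ⟨inducedMM hM, isSome_inducedMM_f_nil hM,
    (inducedMM hM).compatible_resulting _, size_resulting_inducedMM_le hM _⟩

/-- For every transducer `M` compatible with `T` there is a
transducer with at most as many states, compatible with `T`, that results from
some merging map on `T`. -/
theorem exists_resulting_compatible_le {σ γ : Type} [Finite σ] [Finite γ]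
    (T : ObsTable σ γ) (M : Transducer σ γ) (hM : T.Compatible M) :
    ∃ (m : MergingMap T) (h0 : (m.f []).isSome = true),
      T.Compatible (m.resulting h0) ∧ (m.resulting h0).size ≤ M.size :=
  exists_resulting_compatible_le_general T M hM
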